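/- Let φ₁, φ₂, θ ∈ [−π, π] with φ₁ ≠ 0, φ₂ ≠ 0, |θ| ≠ |φ₊|, |θ| ≠ |φ₋|, and suppose φ_l < |θ| < φ_u (case (ii)). Define χ = 4·arctan((m₊ − m₋)/(m₊ + m₋)). Then cosh((r₊ + r₋)/2) = | sin(φ₁/2)·sin(θ) / (2·S₋·cos(χ/2)) | and cosh((r₊ − r₋)/2) = | sin(φ₂/2)·sin(θ) / (2·S₋·cos(χ/2)) |. -/

import Mathlib

/-- `S₊ = (sin²(φ₊/2) + sin²(φ₋/2))/2` where `φ₊ = (φ₁+φ₂)/2`, `φ₋ = (φ₁−φ₂)/2`. -/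
noncomputable def Sp (φ₁ φ₂ : ℝ) : ℝ :=
  (Real.sin ((φ₁ + φ₂) / 4) ^ 2 + Real.sin ((φ₁ - φ₂) / 4) ^ 2) / 2

/-- `S₋ = (sin²(φ₊/2) − sin²(φ₋/2))/2`. -/
noncomputable def Sm (φ₁ φ₂ : ℝ) : ℝ :=
  (Real.sin ((φ₁ + φ₂) / 4) ^ 2 - Real.sin ((φ₁ - φ₂) / 4) ^ 2) / 2

/-- `φ_u = max(|φ₊|, |φ₋|)`. -/
noncomputable def phiu (φ₁ φ₂ : ℝ) : ℝ := max |(φ₁ + φ₂) / 2| |(φ₁ - φ₂) / 2|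

/-- `φ_l = min(|φ₊|, |φ₋|)`. -/
noncomputable def phil (φ₁ φ₂ : ℝ) : ℝ := min |(φ₁ + φ₂) / 2| |(φ₁ - φ₂) / 2|

/-- `m₊ = √|sin²(φ₊/2) − sin²(θ/2)|`. -/
noncomputable def mplus (φ₁ φ₂ θ : ℝ) : ℝ :=
  Real.sqrt |Real.sin ((φ₁ + φ₂) / 4) ^ 2 - Real.sin (θ / 2) ^ 2|

/-- `m₋ = √|sin²(φ₋/2) − sin²(θ/2)|`. -/
noncomputable def mminus (φ₁ φ₂ θ : ℝ) : ℝ :=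
  Real.sqrt |Real.sin ((φ₁ - φ₂) / 4) ^ 2 - Real.sin (θ / 2) ^ 2|

/-- The weight `χ = 4·arctan((m₊ − m₋)/(m₊ + m₋))`. -/
noncomputable def chi (φ₁ φ₂ θ : ℝ) : ℝ :=
  4 * Real.arctan ((mplus φ₁ φ₂ θ - mminus φ₁ φ₂ θ) / (mplus φ₁ φ₂ θ + mminus φ₁ φ₂ θ))

/-- `r₊ = log|sin((φ₊+θ)/2)/sin((φ₊−θ)/2)|`. -/
noncomputable def rplus (φ₁ φ₂ θ : ℝ) : ℝ :=
  Real.log |Real.sin (((φ₁ + φ₂) / 2 + θ) / 2) / Real.sin (((φ₁ + φ₂) / 2 - θ) / 2)|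

/-- `r₋ = log|sin((φ₋+θ)/2)/sin((φ₋−θ)/2)|`. -/
noncomputable def rminus (φ₁ φ₂ θ : ℝ) : ℝ :=
  Real.log |Real.sin (((φ₁ - φ₂) / 2 + θ) / 2) / Real.sin (((φ₁ - φ₂) / 2 - θ) / 2)|

/-- `C₊ = (cos²(φ₊/2) + cos²(φ₋/2))/2`. -/
noncomputable def Cp (φ₁ φ₂ : ℝ) : ℝ :=
  (Real.cos ((φ₁ + φ₂) / 4) ^ 2 + Real.cos ((φ₁ - φ₂) / 4) ^ 2) / 2

/-- `C₋ = (cos²(φ₊/2) − cos²(φ₋/2))/2`. -/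
noncomputable def Cm (φ₁ φ₂ : ℝ) : ℝ :=
  (Real.cos ((φ₁ + φ₂) / 4) ^ 2 - Real.cos ((φ₁ - φ₂) / 4) ^ 2) / 2


open Real

/-- product-to-sum key: sin(x+y)sin(x−y) = sin²x − sin²y. -/
lemma sin_mul_sin (x y : ℝ) :
    Real.sin (x + y) * Real.sin (x - y) = Real.sin x ^ 2 - Real.sin y ^ 2 := by
  rw [Real.sin_add, Real.sin_sub]
  have h1 := Real.sin_sq_add_cos_sq x
  have h2 := Real.sin_sq_add_cos_sq y
  nlinarith [h1, h2]

/-- strict monotonicity of sin² on absolute values within [−π/2, π/2]. -/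
lemma sinsq_lt {x y : ℝ} (hy : |y| ≤ Real.pi / 2) (h : |x| < |y|) :
    Real.sin x ^ 2 < Real.sin y ^ 2 := by
  have hx : |x| ≤ Real.pi / 2 := le_of_lt (lt_of_lt_of_le h hy)
  have hsx : Real.sin x ^ 2 = Real.sin |x| ^ 2 := by
    rcases abs_cases x with ⟨e, _⟩ | ⟨e, _⟩ <;> rw [e] <;> simp [Real.sin_neg]
  have hsy : Real.sin y ^ 2 = Real.sin |y| ^ 2 := by
    rcases abs_cases y with ⟨e, _⟩ | ⟨e, _⟩ <;> rw [e] <;> simp [Real.sin_neg]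
  rw [hsx, hsy]
  have hlt : Real.sin |x| < Real.sin |y| := by
    apply Real.strictMonoOn_sin _ _ h
    · constructor <;> [linarith [abs_nonneg x, Real.pi_pos]; exact hx]
    · constructor <;> [linarith [abs_nonneg y, Real.pi_pos]; exact hy]
  have hnn : 0 ≤ Real.sin |x| :=
    Real.sin_nonneg_of_nonneg_of_le_pi (abs_nonneg x) (by linarith [Real.pi_pos])
  exact pow_lt_pow_left₀ hlt hnn (by norm_num)

lemma abs_sub_of_mul_neg {p q : ℝ} (h : p * q < 0) : |p - q| = |p| + |q| := by
  rcases mul_neg_iff.mp h with ⟨hp, hq⟩ | ⟨hp, hq⟩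
  · rw [abs_of_pos hp, abs_of_neg hq, abs_of_pos (by linarith)]; ring
  · rw [abs_of_neg hp, abs_of_pos hq, abs_of_neg (by linarith)]; ring

lemma cosh_log_key (A B C D : ℝ) (hsign : (A * B) * (C * D) < 0) :
    Real.cosh ((Real.log |A / B| + Real.log |C / D|) / 2)
      = (|A * C| + |B * D|) / (2 * Real.sqrt |(A * B) * (C * D)|) := by
  have hAB : A * B ≠ 0 := fun h => by simp [h] at hsign
  have hCD : C * D ≠ 0 := fun h => by simp [h] at hsign
  have hA : A ≠ 0 := fun h => hAB (by simp [h])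
  have hB : B ≠ 0 := fun h => hAB (by simp [h])
  have hC : C ≠ 0 := fun h => hCD (by simp [h])
  have hD : D ≠ 0 := fun h => hCD (by simp [h])
  have hAC : (0:ℝ) < |A * C| := abs_pos.mpr (mul_ne_zero hA hC)
  have hBD : (0:ℝ) < |B * D| := abs_pos.mpr (mul_ne_zero hB hD)
  set p := Real.sqrt |A * C| with hp
  set q := Real.sqrt |B * D| with hq
  have hp0 : 0 < p := Real.sqrt_pos.mpr hAC
  have hq0 : 0 < q := Real.sqrt_pos.mpr hBD
  have hp2 : p ^ 2 = |A * C| := Real.sq_sqrt hAC.le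
  have hq2 : q ^ 2 = |B * D| := Real.sq_sqrt hBD.le
  have habs : |(A * B) * (C * D)| = |A * C| * |B * D| := by
    rw [← abs_mul]; ring_nf
  have hlog : Real.log |A / B| + Real.log |C / D| = Real.log (|A * C| / |B * D|) := by
    rw [← Real.log_mul (by positivity) (by positivity)]
    congr 1
    rw [abs_div, abs_div, abs_mul, abs_mul]
    field_simp
  rw [hlog, ← Real.log_sqrt (by positivity), Real.sqrt_div hAC.le, ← hp, ← hq,
    Real.cosh_log (by positivity), habs, Real.sqrt_mul hAC.le, ← hp, ← hq]
  rw [← hp2, ← hq2]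
  field_simp

/-- Case (ii) of Proposition 3: the local non-unitary amplitudes `cosh((r₊ ± r₋)/2)`. -/
theorem stmt5 (φ₁ φ₂ θ : ℝ)
    (hφ₁ : φ₁ ∈ Set.Icc (-Real.pi) Real.pi)
    (hφ₂ : φ₂ ∈ Set.Icc (-Real.pi) Real.pi)
    (hθ : θ ∈ Set.Icc (-Real.pi) Real.pi)
    (hφ₁0 : φ₁ ≠ 0) (hφ₂0 : φ₂ ≠ 0)
    (hp : |θ| ≠ |(φ₁ + φ₂) / 2|) (hm : |θ| ≠ |(φ₁ - φ₂) / 2|)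
    (hcase : phil φ₁ φ₂ < |θ| ∧ |θ| < phiu φ₁ φ₂) :
    Real.cosh ((rplus φ₁ φ₂ θ + rminus φ₁ φ₂ θ) / 2)
      = |Real.sin (φ₁ / 2) * Real.sin θ / (2 * Sm φ₁ φ₂ * Real.cos (chi φ₁ φ₂ θ / 2))| ∧
    Real.cosh ((rplus φ₁ φ₂ θ - rminus φ₁ φ₂ θ) / 2)
      = |Real.sin (φ₂ / 2) * Real.sin θ / (2 * Sm φ₁ φ₂ * Real.cos (chi φ₁ φ₂ θ / 2))| := by
  obtain ⟨hc1, hc2⟩ := hcase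
  obtain ⟨h11, h12⟩ := hφ₁
  obtain ⟨h21, h22⟩ := hφ₂
  obtain ⟨h31, h32⟩ := hθ
  have hπ := Real.pi_pos
  set a : ℝ := (φ₁ + φ₂) / 4 with ha
  set b : ℝ := (φ₁ - φ₂) / 4 with hb
  set t : ℝ := θ / 2 with ht
  have hat : |a| ≤ Real.pi / 2 := by rw [abs_le]; constructor <;> (rw [ha]; linarith)
  have hbt : |b| ≤ Real.pi / 2 := by rw [abs_le]; constructor <;> (rw [hb]; linarith)
  have htt : |t| ≤ Real.pi / 2 := by rw [abs_le]; constructor <;> (rw [ht]; linarith)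
  have h2a : |(φ₁ + φ₂) / 2| = 2 * |a| := by
    rw [ha, show (φ₁ + φ₂) / 2 = 2 * ((φ₁ + φ₂) / 4) by ring, abs_mul]; norm_num
  have h2b : |(φ₁ - φ₂) / 2| = 2 * |b| := by
    rw [hb, show (φ₁ - φ₂) / 2 = 2 * ((φ₁ - φ₂) / 4) by ring, abs_mul]; norm_num
  have h2t : |θ| = 2 * |t| := by
    rw [ht, show θ = 2 * (θ / 2) by ring, abs_mul]; norm_num
  set P : ℝ := Real.sin a ^ 2 - Real.sin t ^ 2 with hP
  set Q : ℝ := Real.sin b ^ 2 - Real.sin t ^ 2 with hQ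
  have hPQ : P * Q < 0 := by
    simp only [phil, phiu] at hc1 hc2
    rw [h2a, h2b, h2t] at hc1 hc2
    rcases le_total |a| |b| with h | h
    · rw [min_eq_left (by linarith)] at hc1
      rw [max_eq_right (by linarith)] at hc2
      have e1 : Real.sin a ^ 2 < Real.sin t ^ 2 := sinsq_lt htt (by linarith)
      have e2 : Real.sin t ^ 2 < Real.sin b ^ 2 := sinsq_lt hbt (by linarith)
      exact mul_neg_of_neg_of_pos (by rw [hP]; linarith) (by rw [hQ]; linarith)
    · rw [min_eq_right (by linarith)] at hc1
      rw [max_eq_left (by linarith)] at hc2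
      have e1 : Real.sin b ^ 2 < Real.sin t ^ 2 := sinsq_lt htt (by linarith)
      have e2 : Real.sin t ^ 2 < Real.sin a ^ 2 := sinsq_lt hat (by linarith)
      exact mul_neg_of_pos_of_neg (by rw [hP]; linarith) (by rw [hQ]; linarith)
  have hPne : P ≠ 0 := fun h => by simp [h] at hPQ
  have hQne : Q ≠ 0 := fun h => by simp [h] at hPQ
  have hPQne : P ≠ Q := by
    rcases mul_neg_iff.mp hPQ with ⟨e1, e2⟩ | ⟨e1, e2⟩ <;> linarith
  set A : ℝ := Real.sin (a + t) with hAdef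
  set B : ℝ := Real.sin (a - t) with hBdef
  set C : ℝ := Real.sin (b + t) with hCdef
  set D : ℝ := Real.sin (b - t) with hDdef
  have hABP : A * B = P := by rw [hAdef, hBdef, hP]; exact sin_mul_sin a t
  have hCDQ : C * D = Q := by rw [hCdef, hDdef, hQ]; exact sin_mul_sin b t
  have hsign : (A * B) * (C * D) < 0 := by rw [hABP, hCDQ]; exact hPQ
  have hsign2 : (A * B) * (D * C) < 0 := by rw [mul_comm D C]; exact hsign
  -- m± as sqrt of |P|, |Q|
  have hmp : mplus φ₁ φ₂ θ = Real.sqrt |P| := by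
    simp only [mplus, hP, ← ha, ← ht]
  have hmm : mminus φ₁ φ₂ θ = Real.sqrt |Q| := by
    simp only [mminus, hQ, ← hb, ← ht]
  set mp : ℝ := Real.sqrt |P| with hmpd
  set mm : ℝ := Real.sqrt |Q| with hmmd
  clear_value a b t P Q A B C D mp mm
  have hmp0 : 0 < mp := hmpd ▸ Real.sqrt_pos.mpr (abs_pos.mpr hPne)
  have hmm0 : 0 < mm := hmmd ▸ Real.sqrt_pos.mpr (abs_pos.mpr hQne)
  have hmp2 : mp ^ 2 = |P| := by rw [hmpd]; exact Real.sq_sqrt (abs_nonneg P)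
  have hmm2 : mm ^ 2 = |Q| := by rw [hmmd]; exact Real.sq_sqrt (abs_nonneg Q)
  have hsum : mp ^ 2 + mm ^ 2 = |P - Q| := by
    rw [hmp2, hmm2, abs_sub_of_mul_neg hPQ]
  have hSm : 2 * Sm φ₁ φ₂ = P - Q := by
    simp only [Sm, hP, hQ, ← ha, ← hb]; ring
  have hcos : Real.cos (chi φ₁ φ₂ θ / 2) = 2 * mp * mm / (mp ^ 2 + mm ^ 2) := by
    rw [show chi φ₁ φ₂ θ / 2 = 2 * Real.arctan ((mp - mm) / (mp + mm)) by
      rw [chi, hmp, hmm]; ring]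
    rw [Real.cos_two_mul, Real.cos_sq_arctan]
    have h1 : mp + mm ≠ 0 := by positivity
    have h2 : mp ^ 2 + mm ^ 2 ≠ 0 := by positivity
    have h3 : (1 : ℝ) + ((mp - mm) / (mp + mm)) ^ 2 ≠ 0 := by positivity
    field_simp
    ring
  have hmpm : mp * mm = Real.sqrt |(A * B) * (C * D)| := by
    rw [hABP, hCDQ, hmpd, hmmd, abs_mul, Real.sqrt_mul (abs_nonneg P)]
  have hden : |2 * Sm φ₁ φ₂ * Real.cos (chi φ₁ φ₂ θ / 2)|
      = 2 * Real.sqrt |(A * B) * (C * D)| := by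
    rw [abs_mul, hcos, hSm, abs_div, abs_of_nonneg (by positivity : (0:ℝ) ≤ 2 * mp * mm),
      abs_of_nonneg (by positivity : (0:ℝ) ≤ mp ^ 2 + mm ^ 2), ← hsum, ← hmpm]
    have h2 : mp ^ 2 + mm ^ 2 ≠ 0 := by positivity
    field_simp
  have hdne : (2 : ℝ) * Sm φ₁ φ₂ * Real.cos (chi φ₁ φ₂ θ / 2) ≠ 0 := by
    intro h
    rw [h, abs_zero] at hden
    have : 0 < Real.sqrt |(A * B) * (C * D)| := Real.sqrt_pos.mpr (abs_pos.mpr hsign.ne)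
    linarith
  -- numerator identities
  have hN1 : A * C - B * D = Real.sin (φ₁ / 2) * Real.sin θ := by
    rw [hAdef, hBdef, hCdef, hDdef,
      show φ₁ / 2 = a + b by rw [ha, hb]; ring, show θ = t + t by rw [ht]; ring]
    simp only [Real.sin_add, Real.sin_sub, Real.cos_add, Real.cos_sub]
    ring
  have hN2 : B * C - A * D = Real.sin (φ₂ / 2) * Real.sin θ := by
    rw [hAdef, hBdef, hCdef, hDdef,
      show φ₂ / 2 = a - b by rw [ha, hb]; ring, show θ = t + t by rw [ht]; ring]
    simp only [Real.sin_add, Real.sin_sub, Real.cos_add, Real.cos_sub]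
    ring
  have hrp : rplus φ₁ φ₂ θ = Real.log |A / B| := by
    rw [rplus, show ((φ₁ + φ₂) / 2 + θ) / 2 = a + t by rw [ha, ht]; ring,
      show ((φ₁ + φ₂) / 2 - θ) / 2 = a - t by rw [ha, ht]; ring, ← hAdef, ← hBdef]
  have hrm : rminus φ₁ φ₂ θ = Real.log |C / D| := by
    rw [rminus, show ((φ₁ - φ₂) / 2 + θ) / 2 = b + t by rw [hb, ht]; ring,
      show ((φ₁ - φ₂) / 2 - θ) / 2 = b - t by rw [hb, ht]; ring, ← hCdef, ← hDdef]
  have hCne : C ≠ 0 := fun h => hQne (by rw [← hCDQ, h]; ring)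
  have hDne : D ≠ 0 := fun h => hQne (by rw [← hCDQ, h]; ring)
  have hrm' : rplus φ₁ φ₂ θ - rminus φ₁ φ₂ θ = rplus φ₁ φ₂ θ + Real.log |D / C| := by
    rw [hrm, show |D / C| = |C / D|⁻¹ by rw [abs_div, abs_div, inv_div], Real.log_inv]
    ring
  constructor
  · rw [hrp, hrm, cosh_log_key A B C D hsign, abs_div, hden,
      ← hN1, abs_sub_of_mul_neg (by rw [show (A * C) * (B * D) = (A * B) * (C * D) by ring]; exact hsign)]
  · rw [hrm', hrp, cosh_log_key A B D C hsign2, abs_div, hden,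
      ← hN2, abs_sub_of_mul_neg (by rw [show (B * C) * (A * D) = (A * B) * (C * D) by ring]; exact hsign),
      show (A * B) * (D * C) = (A * B) * (C * D) by ring]
    ring
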